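/- arXiv:1610.01686 — 2 statements merged into one kernel-verified Lean document; each statement's English description precedes it below -/
import Mathlib

section
/- For m, s ≥ 1, let E⁻_m(s) denote the number of partitions with distinct parts that are simultaneously s-core and (ms−1)-core. Then E⁻_m(1) = 1, E⁻_m(2) = m, and for s ≥ 3, E⁻_m(s) = E⁻_m(s−1) + m·E⁻_m(s−2). -/
/-- A partition: a weakly decreasing list of positive integers. -/
def IsPartition (l : List ℕ) : Prop :=
  l.Pairwise (· ≥ ·) ∧ ∀ x ∈ l, 0 < x

/-- Hook length at the cell in row `i`, column `j` (0-indexed). -/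
def hookLength (l : List ℕ) (i j : ℕ) : ℕ :=
  (l.getD i 0 - j - 1) + ((l.filter (fun x => j < x)).length - i - 1) + 1

/-- The Young diagram of `l` contains a hook of length `h`. -/
def HasHook (l : List ℕ) (h : ℕ) : Prop :=
  ∃ i j, j < l.getD i 0 ∧ hookLength l i j = h

/-- `l` is an `s`-core: no hook of length `s`. -/
def IsCore (s : ℕ) (l : List ℕ) : Prop := ¬ HasHook l s

/-- The conjugate (transpose) partition. -/
def conjugate (l : List ℕ) : List ℕ :=
  (List.range (l.headD 0)).map (fun j => (l.filter (fun x => j < x)).length)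

def SelfConjugate (l : List ℕ) : Prop := conjugate l = l

/-- The staircase partition `(k, k-1, …, 1)`. -/
def staircase (k : ℕ) : List ℕ := (List.range k).map (fun i => k - i)

/-- The minimal bead set: the set of first-column hook lengths. -/
def beadSet (l : List ℕ) : Finset ℕ :=
  (Finset.range l.length).image (fun i => l.getD i 0 + (l.length - 1 - i))

/-!
A partition into distinct parts is determined by its bead set (the hook lengths of its first
column): a finite set of positive integers with no two consecutive elements. The cells `(i, j)`
correspond to the pairs of a bead `b` (of row `i`) and a smaller non-bead (the gap
`j + n - columnLength l j`), the hook length being their difference; so `l` is an `h`-core iff its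
bead set is closed under subtracting `h`.

A bead set closed under subtracting `s` contains no multiple of `s`, and meets each residue class
`r + 1` (`r < s - 1`) in an initial segment `r + 1, r + 1 + s, …` of some length `p r`.
Sparseness and closure under subtracting `m * s - 1` say exactly that `p r` and `p (r + 1)` are not
both nonzero, that `p r ≤ m + p (r + 1)`, and that the last entry is below `m`. Such a profile of
length `n + 2` starts either with `0`, followed by a profile of length `n + 1`, or with `a + 1`,
`a < m`, followed by `0` and a profile of length `n`; this gives the recursion.
-/

theorem Nat.exists_forall_iff_lt_of_succ_imp {P : ℕ → Prop} (hdown : ∀ k, P (k + 1) → P k)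
    (hbound : ∃ k, ¬ P k) : ∃ a, ∀ k, P k ↔ k < a := by
  classical
  have hmono : ∀ d k, P (k + d) → P k := by
    intro d
    induction d with
    | zero => exact fun _ => id
    | succ d ih => exact fun k hk => ih k (hdown _ hk)
  refine ⟨Nat.find hbound, fun k => ⟨fun hk => ?_, fun hk => ?_⟩⟩
  · by_contra hle
    exact Nat.find_spec hbound
      (hmono (k - Nat.find hbound) _ (by rwa [Nat.add_sub_cancel' (by omega)]))
  · exact not_not.mp (Nat.find_min hbound hk)

def columnLength (l : List ℕ) (j : ℕ) : ℕ := (l.filter (fun x => j < x)).length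

theorem columnLength_le_length (l : List ℕ) (j : ℕ) : columnLength l j ≤ l.length :=
  List.length_filter_le _ _

theorem hookLength_eq_columnLength (l : List ℕ) (i j : ℕ) :
    hookLength l i j = (l.getD i 0 - j - 1) + (columnLength l j - i - 1) + 1 := rfl

section HooksAndBeads

variable {l : List ℕ}

theorem getD_le_getD_of_pairwise_ge (hl : l.Pairwise (· ≥ ·)) {i k : ℕ} (hik : i ≤ k) :
    l.getD k 0 ≤ l.getD i 0 := by
  rcases hik.eq_or_lt with rfl | hik
  · rfl
  by_cases hk : k < l.length
  · rw [List.getD_eq_getElem _ _ hk, List.getD_eq_getElem _ _ (hik.trans hk)]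
    exact List.pairwise_iff_getElem.mp hl i k _ hk hik
  · rw [List.getD_eq_default _ _ (not_lt.mp hk)]
    exact Nat.zero_le _

theorem lt_length_of_lt_getD {i j : ℕ} (h : j < l.getD i 0) : i < l.length := by
  by_contra hi
  rw [List.getD_eq_default _ _ (not_lt.mp hi)] at h
  exact Nat.not_lt_zero _ h

theorem lt_getD_iff_lt_columnLength (hl : l.Pairwise (· ≥ ·)) (j : ℕ) {k : ℕ}
    (hk : k < l.length) : j < l.getD k 0 ↔ k < columnLength l j := by
  induction l generalizing k with
  | nil => simp at hk
  | cons x xs ih =>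
    by_cases hjx : j < x
    · cases k with
      | zero => simp [columnLength, hjx]
      | succ k =>
        simpa [columnLength, List.filter_cons, hjx] using
          ih (List.pairwise_cons.mp hl).2 (Nat.lt_of_succ_lt_succ hk)
    · have hcol : columnLength (x :: xs) j = 0 := by
        rw [columnLength, List.length_eq_zero_iff, List.filter_eq_nil_iff]
        intro y hy hjy
        have hyx : y ≤ x := by
          rcases List.mem_cons.mp hy with rfl | hy
          exacts [le_rfl, (List.pairwise_cons.mp hl).1 y hy]
        exact hjx (lt_of_lt_of_le (by simpa using hjy) hyx)
      have := getD_le_getD_of_pairwise_ge hl (Nat.zero_le k)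
      simp only [List.getD_cons_zero] at this
      rw [hcol]
      omega

theorem columnLength_eq_of_forall (hl : l.Pairwise (· ≥ ·)) {j r : ℕ} (hr : r ≤ l.length)
    (H : ∀ k < l.length, j < l.getD k 0 ↔ k < r) : columnLength l j = r := by
  have hc := columnLength_le_length l j
  by_contra hne
  have hk : min r (columnLength l j) < l.length := by omega
  have := (H _ hk).symm.trans (lt_getD_iff_lt_columnLength hl j hk)
  omega

theorem mem_beadSet {x : ℕ} :
    x ∈ beadSet l ↔ ∃ i < l.length, x = l.getD i 0 + (l.length - 1 - i) := by
  simp [beadSet, eq_comm]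

theorem add_sub_columnLength_notMem_beadSet (hl : l.Pairwise (· ≥ ·)) (j : ℕ) :
    j + (l.length - columnLength l j) ∉ beadSet l := by
  rw [mem_beadSet]
  rintro ⟨k, hk, hkeq⟩
  have hcol := lt_getD_iff_lt_columnLength hl j hk
  have := columnLength_le_length l j
  by_cases hkc : k < columnLength l j
  · have := hcol.mpr hkc
    omega
  · have := mt hcol.mp hkc
    omega

theorem hasHook_of_notMem_beadSet (hl : l.Pairwise (· ≥ ·)) {i x : ℕ} (hi : i < l.length)
    (hx : x < l.getD i 0 + (l.length - 1 - i)) (hgap : x ∉ beadSet l) :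
    HasHook l (l.getD i 0 + (l.length - 1 - i) - x) := by
  set n := l.length
  have hstep : ∀ k, l.getD (k + 1) 0 ≤ l.getD k 0 :=
    fun k => getD_le_getD_of_pairwise_ge hl k.le_succ
  -- `r` is the number of beads above the gap `x`
  obtain ⟨r, hr⟩ := Nat.exists_forall_iff_lt_of_succ_imp
    (P := fun k => k < n ∧ x < l.getD k 0 + (n - 1 - k))
    (fun k hk => ⟨by omega, by have := hstep k; omega⟩) ⟨n, fun h => h.1.false⟩
  have hrn : r ≤ n := by
    by_contra hrn
    exact ((hr n).mpr (by omega)).1.false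
  have hir : i < r := (hr i).mp ⟨hi, hx⟩
  have habove : x < l.getD (r - 1) 0 + (n - r) := by
    have := ((hr (r - 1)).mpr (by omega)).2
    omega
  have hbelow : r < n → l.getD r 0 + (n - 1 - r) < x := by
    intro hrn'
    have hle : ¬ x < l.getD r 0 + (n - 1 - r) := fun h => (lt_irrefl r) ((hr r).mp ⟨hrn', h⟩)
    have hne : x ≠ l.getD r 0 + (n - 1 - r) := fun h => hgap (mem_beadSet.mpr ⟨r, hrn', h⟩)
    omega
  have hxr : n - r ≤ x := by
    rcases hrn.lt_or_eq with h | h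
    · have := hbelow h
      omega
    · omega
  have hcol : columnLength l (x - (n - r)) = r := by
    refine columnLength_eq_of_forall hl hrn fun k hk => ⟨fun hjk => ?_, fun hkr => ?_⟩
    · by_contra hkr
      have := getD_le_getD_of_pairwise_ge hl (not_lt.mp hkr)
      have := hbelow (by omega)
      omega
    · have := getD_le_getD_of_pairwise_ge hl (show k ≤ r - 1 by omega)
      omega
  have hcell : x - (n - r) < l.getD i 0 := by
    have := getD_le_getD_of_pairwise_ge hl (show i ≤ r - 1 by omega)
    omega
  refine ⟨i, x - (n - r), hcell, ?_⟩
  rw [hookLength_eq_columnLength, hcol]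
  omega

theorem hasHook_iff_exists_bead (hl : l.Pairwise (· ≥ ·)) (h : ℕ) :
    HasHook l h ↔ ∃ b ∈ beadSet l, h ≤ b ∧ b - h ∉ beadSet l := by
  constructor
  · rintro ⟨i, j, hj, rfl⟩
    have hi := lt_length_of_lt_getD hj
    have hic := (lt_getD_iff_lt_columnLength hl j hi).mp hj
    have := columnLength_le_length l j
    refine ⟨_, mem_beadSet.mpr ⟨i, hi, rfl⟩, ?_, ?_⟩
    · rw [hookLength_eq_columnLength]
      omega
    · convert add_sub_columnLength_notMem_beadSet hl j using 2
      rw [hookLength_eq_columnLength]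
      omega
  · rintro ⟨b, hb, hhb, hgap⟩
    obtain ⟨i, hi, rfl⟩ := mem_beadSet.mp hb
    have hh : h ≠ 0 := by rintro rfl; exact hgap (by simpa using hb)
    have := hasHook_of_notMem_beadSet hl hi (by omega) hgap
    rwa [Nat.sub_sub_self hhb] at this

end HooksAndBeads

def SubClosed (h : ℕ) (S : Finset ℕ) : Prop := ∀ b ∈ S, h ≤ b → b - h ∈ S

theorem isCore_iff_subClosed {l : List ℕ} (hl : l.Pairwise (· ≥ ·)) (h : ℕ) :
    IsCore h l ↔ SubClosed h (beadSet l) := by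
  simp only [IsCore, SubClosed, hasHook_iff_exists_bead hl, not_exists, not_and, not_not]

def IsSparse (S : Finset ℕ) : Prop := 0 ∉ S ∧ ∀ x ∈ S, x + 1 ∉ S

theorem IsSparse.mono {S T : Finset ℕ} (hT : IsSparse T) (hST : S ⊆ T) : IsSparse S :=
  ⟨fun h => hT.1 (hST h), fun x hx hx1 => hT.2 x (hST hx) (hST hx1)⟩

theorem beadSet_nil : beadSet [] = ∅ := rfl

theorem beadSet_cons (a : ℕ) (l : List ℕ) :
    beadSet (a :: l) = insert (a + l.length) (beadSet l) := by
  ext x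
  simp only [mem_beadSet, Finset.mem_insert, List.length_cons]
  constructor
  · rintro ⟨_ | i, hi, rfl⟩
    · simp
    · exact Or.inr ⟨i, by omega, by simp; omega⟩
  · rintro (rfl | ⟨i, hi, rfl⟩)
    · exact ⟨0, by omega, by simp⟩
    · exact ⟨i + 1, by omega, by simp; omega⟩

theorem lt_add_length_of_mem_beadSet {l : List ℕ} {a x : ℕ} (hl : l.Pairwise (· ≥ ·))
    (ha : ∀ y ∈ l, y ≤ a) (hx : x ∈ beadSet l) : x < a + l.length := by
  induction l with
  | nil => simp [beadSet_nil] at hx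
  | cons b l ih =>
    rw [List.pairwise_cons] at hl
    rw [beadSet_cons, Finset.mem_insert] at hx
    rcases hx with rfl | hx
    · have := ha b List.mem_cons_self
      simp only [List.length_cons]
      omega
    · have := ih hl.2 (fun y hy => ha y (List.mem_cons_of_mem b hy)) hx
      simp only [List.length_cons]
      omega

theorem card_beadSet {l : List ℕ} (hl : l.Pairwise (· ≥ ·)) :
    (beadSet l).card = l.length := by
  induction l with
  | nil => rfl
  | cons a l ih =>
    rw [List.pairwise_cons] at hl
    rw [beadSet_cons, Finset.card_insert_of_notMem
      (fun h => (lt_add_length_of_mem_beadSet hl.2 hl.1 h).false), ih hl.2, List.length_cons]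

theorem beadSet_injOn : Set.InjOn beadSet {l : List ℕ | l.Pairwise (· ≥ ·)} := by
  intro l₁ hl₁ l₂ hl₂ heq
  have hlen : l₁.length = l₂.length := by
    rw [← card_beadSet hl₁, ← card_beadSet hl₂, heq]
  induction l₁ generalizing l₂ with
  | nil => exact (List.length_eq_zero_iff.mp hlen.symm).symm
  | cons a l₁ ih =>
    obtain _ | ⟨b, l₂⟩ := l₂
    · simp at hlen
    replace hl₁ := List.pairwise_cons.mp hl₁
    replace hl₂ := List.pairwise_cons.mp hl₂
    simp only [List.length_cons, Nat.add_right_cancel_iff] at hlen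
    rw [beadSet_cons, beadSet_cons, hlen] at heq
    -- the largest bead is the one of the first row
    have hab : a = b := by
      have ha := heq ▸ Finset.mem_insert_self (a + l₂.length) (beadSet l₁)
      have hb := heq.symm ▸ Finset.mem_insert_self (b + l₂.length) (beadSet l₂)
      rw [Finset.mem_insert] at ha hb
      rcases ha with ha | ha
      · omega
      rcases hb with hb | hb
      · omega
      have := lt_add_length_of_mem_beadSet hl₂.2 hl₂.1 ha
      have := lt_add_length_of_mem_beadSet hl₁.2 hl₁.1 (hlen ▸ hb)
      omega
    subst hab
    have hrest : beadSet l₁ = beadSet l₂ := by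
      have hn₁ := fun h => (lt_add_length_of_mem_beadSet hl₁.2 hl₁.1 h).false
      have hn₂ := fun h => (lt_add_length_of_mem_beadSet hl₂.2 hl₂.1 h).false
      rw [hlen] at hn₁
      rw [← Finset.erase_insert hn₁, heq, Finset.erase_insert hn₂]
    rw [ih hl₁.2 hl₂.2 hrest hlen]

theorem isSparse_beadSet {l : List ℕ} (hl : l.Pairwise (· > ·)) (hpos : ∀ x ∈ l, 0 < x) :
    IsSparse (beadSet l) := by
  induction l with
  | nil => simp [IsSparse, beadSet_nil]
  | cons a l ih =>
    rw [List.pairwise_cons] at hl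
    obtain ⟨h0, hcons⟩ := ih hl.2 (fun x hx => hpos x (List.mem_cons_of_mem a hx))
    have ha := hpos a List.mem_cons_self
    have hlt : ∀ x ∈ beadSet l, x + 1 < a + l.length := fun x hx => by
      have := lt_add_length_of_mem_beadSet (a := a - 1) (hl.2.imp le_of_lt)
        (fun y hy => Nat.le_sub_one_of_lt (hl.1 y hy)) hx
      omega
    rw [beadSet_cons]
    refine ⟨?_, fun x hx hx1 => ?_⟩
    · simp only [Finset.mem_insert, not_or]
      exact ⟨by omega, h0⟩
    · rw [Finset.mem_insert] at hx hx1
      rcases hx with rfl | hx <;> rcases hx1 with hx1 | hx1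
      · omega
      · have := hlt _ hx1
        omega
      · have := hlt _ hx
        omega
      · exact hcons x hx hx1

theorem exists_beadSet_eq {S : Finset ℕ} (hS : IsSparse S) :
    ∃ l : List ℕ, l.Pairwise (· > ·) ∧ (∀ x ∈ l, 0 < x) ∧ beadSet l = S := by
  induction S using Finset.induction_on_max with
  | empty => exact ⟨[], List.Pairwise.nil, by simp, beadSet_nil⟩
  | insert M S hM ih =>
    obtain ⟨l, hl, hpos, rfl⟩ := ih (hS.mono (Finset.subset_insert M _))
    -- the new first row is `M - n`, and it is longer than the old first row
    have hbound : ∀ y ∈ l, y < M - l.length := by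
      obtain _ | ⟨b, l'⟩ := l
      · simp
      have htop : b + l'.length ∈ beadSet (b :: l') := by
        rw [beadSet_cons]
        exact Finset.mem_insert_self _ _
      have hM1 : b + l'.length + 1 ≠ M := fun h =>
        hS.2 _ (Finset.mem_insert_of_mem htop) (by rw [h]; exact Finset.mem_insert_self M _)
      have := hM _ htop
      intro y hy
      have hyb : y ≤ b := by
        rcases List.mem_cons.mp hy with rfl | hy
        exacts [le_rfl, le_of_lt (List.pairwise_cons.mp hl |>.1 y hy)]
      simp only [List.length_cons]
      omega
    have hM0 : 0 < M - l.length := by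
      rcases l with _ | ⟨b, l'⟩
      · have : M ≠ 0 := fun h => hS.1 (h ▸ Finset.mem_insert_self M _)
        simp only [List.length_nil]
        omega
      · exact Nat.lt_of_le_of_lt (Nat.zero_le _) (hbound b List.mem_cons_self)
    refine ⟨(M - l.length) :: l, List.pairwise_cons.mpr ⟨hbound, hl⟩, ?_, ?_⟩
    · rintro x (_ | ⟨_, hx⟩)
      exacts [hM0, hpos x hx]
    · rw [beadSet_cons, Nat.sub_add_cancel (by omega)]

theorem isPartition_and_nodup_iff {l : List ℕ} :
    IsPartition l ∧ l.Nodup ↔ l.Pairwise (· > ·) ∧ ∀ x ∈ l, 0 < x := by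
  rw [IsPartition, and_right_comm, List.Nodup, ← List.pairwise_and_iff]
  refine and_congr_left' ⟨List.Pairwise.imp fun h => lt_of_le_of_ne h.1 h.2.symm,
    List.Pairwise.imp fun h => ⟨h.le, h.ne'⟩⟩

def distinctCores (s t : ℕ) : Set (List ℕ) :=
  {l | IsPartition l ∧ l.Nodup ∧ IsCore s l ∧ IsCore t l}

def sparseClosedSets (s t : ℕ) : Set (Finset ℕ) :=
  {S | IsSparse S ∧ SubClosed s S ∧ SubClosed t S}

theorem bijOn_beadSet_distinctCores (s t : ℕ) :
    Set.BijOn beadSet (distinctCores s t) (sparseClosedSets s t) := by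
  refine ⟨fun l ⟨hp, hnd, hs, ht⟩ => ?_, beadSet_injOn.mono fun l hl => hl.1.1,
    fun S hS => ?_⟩
  · obtain ⟨hstrict, hpos⟩ := isPartition_and_nodup_iff.mp ⟨hp, hnd⟩
    exact ⟨isSparse_beadSet hstrict hpos, (isCore_iff_subClosed hp.1 s).mp hs,
      (isCore_iff_subClosed hp.1 t).mp ht⟩
  · obtain ⟨hsparse, hs, ht⟩ := hS
    obtain ⟨l, hstrict, hpos, rfl⟩ := exists_beadSet_eq hsparse
    obtain ⟨hp, hnd⟩ := isPartition_and_nodup_iff.mpr ⟨hstrict, hpos⟩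
    exact ⟨l, ⟨hp, hnd, (isCore_iff_subClosed hp.1 s).mpr hs,
      (isCore_iff_subClosed hp.1 t).mpr ht⟩, rfl⟩

def profileSet (s : ℕ) (p : List ℕ) : Finset ℕ :=
  (Finset.range (s - 1)).biUnion fun r =>
    (Finset.range (p.getD r 0)).image fun j => r + 1 + j * s

def Admissible (m : ℕ) : List ℕ → Prop
  | [] => True
  | [a] => a < m
  | a :: b :: q => a ≤ m + b ∧ (a = 0 ∨ b = 0) ∧ Admissible m (b :: q)

theorem admissible_iff (m : ℕ) : ∀ p : List ℕ, Admissible m p ↔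
    (∀ r, r + 1 < p.length → (p.getD r 0 = 0 ∨ p.getD (r + 1) 0 = 0) ∧
      p.getD r 0 ≤ m + p.getD (r + 1) 0) ∧ ∀ r, r + 1 = p.length → p.getD r 0 < m
  | [] => by simp [Admissible]
  | [a] => by simp [Admissible]
  | a :: b :: q => by
    rw [Admissible, admissible_iff m (b :: q)]
    constructor
    · rintro ⟨hle, hzero, hadj, hlast⟩
      refine ⟨fun r hr => ?_, fun r hr => ?_⟩
      · cases r with
        | zero => exact ⟨hzero, hle⟩
        | succ r => simpa using hadj r (by simpa using hr)
      · cases r with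
        | zero => simp at hr
        | succ r => simpa using hlast r (by simpa using hr)
    · rintro ⟨hadj, hlast⟩
      obtain ⟨hzero, hle⟩ := hadj 0 (by simp)
      exact ⟨hle, hzero, fun r hr => by simpa using hadj (r + 1) (by simpa using hr),
        fun r hr => by simpa using hlast (r + 1) (by simpa using hr)⟩

section ProfileSet

variable {s : ℕ}

theorem mem_profileSet {p : List ℕ} {x : ℕ} :
    x ∈ profileSet s p ↔ ∃ r < s - 1, ∃ j < p.getD r 0, r + 1 + j * s = x := by
  simp [profileSet]

theorem add_mul_eq_add_mul_iff {r r' j j' : ℕ} (hr : r + 1 < s) (hr' : r' + 1 < s) :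
    r + 1 + j * s = r' + 1 + j' * s ↔ r = r' ∧ j = j' := by
  refine ⟨fun h => ?_, fun ⟨h₁, h₂⟩ => h₁ ▸ h₂ ▸ rfl⟩
  have hmod := congrArg (· % s) h
  have hdiv := congrArg (· / s) h
  simp only [Nat.add_mul_mod_self_right, Nat.mod_eq_of_lt hr, Nat.mod_eq_of_lt hr'] at hmod
  simp only [Nat.add_mul_div_right _ _ (show 0 < s by omega), Nat.div_eq_of_lt hr,
    Nat.div_eq_of_lt hr'] at hdiv
  omega

theorem add_mul_mem_profileSet_iff {p : List ℕ} {r j : ℕ} (hr : r + 1 < s) :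
    r + 1 + j * s ∈ profileSet s p ↔ j < p.getD r 0 := by
  rw [mem_profileSet]
  constructor
  · rintro ⟨r', hr', j', hj', h⟩
    obtain ⟨rfl, rfl⟩ := (add_mul_eq_add_mul_iff (by omega) hr).mp h
    exact hj'
  · exact fun hj => ⟨r, by omega, j, hj, rfl⟩

theorem mul_notMem_profileSet (p : List ℕ) (j : ℕ) : j * s ∉ profileSet s p := by
  rw [mem_profileSet]
  rintro ⟨r, hr, j', -, h⟩
  have := congrArg (· % s) h
  simp [Nat.add_mul_mod_self_right, Nat.mod_eq_of_lt (show r + 1 < s by omega)] at this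

variable {m : ℕ} {p : List ℕ}

theorem isSparse_profileSet (hp : Admissible m p) (hlen : p.length = s - 1) :
    IsSparse (profileSet s p) := by
  obtain ⟨hadj, -⟩ := (admissible_iff m p).mp hp
  refine ⟨by simpa using mul_notMem_profileSet (s := s) p 0, fun x hx hx1 => ?_⟩
  obtain ⟨r, hr, j, hj, rfl⟩ := mem_profileSet.mp hx
  rcases (show r + 2 < s ∨ r + 2 = s by omega) with hr2 | hr2
  · rw [show r + 1 + j * s + 1 = r + 1 + 1 + j * s by ring,
      add_mul_mem_profileSet_iff hr2] at hx1
    have := hadj r (by omega)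
    omega
  · rw [show r + 1 + j * s + 1 = (j + 1) * s by rw [← hr2]; ring] at hx1
    exact mul_notMem_profileSet p _ hx1

theorem subClosed_profileSet_self (p : List ℕ) : SubClosed s (profileSet s p) := by
  intro x hx hsx
  obtain ⟨r, hr, j, hj, rfl⟩ := mem_profileSet.mp hx
  obtain _ | j := j
  · simp only [zero_mul, add_zero] at hsx
    omega
  · rw [show r + 1 + (j + 1) * s - s = r + 1 + j * s by rw [add_one_mul]; omega,
      add_mul_mem_profileSet_iff (by omega)]
    omega

theorem subClosed_profileSet (hp : Admissible m p) (hlen : p.length = s - 1) :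
    SubClosed (m * s - 1) (profileSet s p) := by
  obtain ⟨hadj, hlast⟩ := (admissible_iff m p).mp hp
  intro x hx htx
  obtain ⟨r, hr, j, hj, rfl⟩ := mem_profileSet.mp hx
  have hm : 0 < m := (Nat.zero_le _).trans_lt (hlast (s - 2) (by omega))
  have hms : s ≤ m * s := Nat.le_mul_of_pos_left s hm
  rcases (show r + 2 < s ∨ r + 2 = s by omega) with hr2 | hr2
  · -- `x - (m * s - 1)` lies in the next residue class, `m` rows lower
    have hjm : m ≤ j := by
      by_contra h
      have := Nat.mul_le_mul_right s (show j + 1 ≤ m by omega)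
      rw [add_one_mul] at this
      omega
    obtain ⟨d, rfl⟩ := Nat.exists_eq_add_of_le hjm
    rw [show r + 1 + (m + d) * s - (m * s - 1) = r + 1 + 1 + d * s by rw [add_mul]; omega,
      add_mul_mem_profileSet_iff hr2]
    have := (hadj r (by omega)).2
    omega
  · have := hlast r (by omega)
    have := Nat.mul_le_mul_right s (show j + 2 ≤ m by omega)
    rw [add_mul] at this
    omega

end ProfileSet

theorem getD_map_range_of_lt (a : ℕ → ℕ) {n r : ℕ} (hr : r < n) :
    ((List.range n).map a).getD r 0 = a r := by
  simp [hr]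

section Heights

variable {s : ℕ} {S : Finset ℕ}

theorem mul_notMem_of_subClosed (h0 : 0 ∉ S) (hS : SubClosed s S) (j : ℕ) : j * s ∉ S := by
  induction j with
  | zero => simpa using h0
  | succ j ih =>
    intro h
    have := hS _ h (by rw [add_one_mul]; omega)
    rw [add_one_mul, Nat.add_sub_cancel] at this
    exact ih this

theorem exists_height (hS : SubClosed s S) (hs : 0 < s) (r : ℕ) :
    ∃ a, ∀ j, r + 1 + j * s ∈ S ↔ j < a := by
  refine Nat.exists_forall_iff_lt_of_succ_imp (fun j h => ?_) ⟨S.sup id + 1, fun h => ?_⟩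
  · have := hS _ h (by rw [add_one_mul]; omega)
    rwa [show r + 1 + (j + 1) * s - s = r + 1 + j * s by rw [add_one_mul]; omega] at this
  · have h₁ : r + 1 + (S.sup id + 1) * s ≤ S.sup id := Finset.le_sup (f := id) h
    have h₂ : S.sup id + 1 ≤ (S.sup id + 1) * s := Nat.le_mul_of_pos_right _ hs
    omega

variable {a : ℕ → ℕ}

theorem profileSet_heights (ha : ∀ r j, r + 1 + j * s ∈ S ↔ j < a r) (h0 : 0 ∉ S)
    (hS : SubClosed s S) (hs : 0 < s) :
    profileSet s ((List.range (s - 1)).map a) = S := by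
  ext x
  rw [mem_profileSet]
  constructor
  · rintro ⟨r, hr, j, hj, rfl⟩
    rw [getD_map_range_of_lt a hr] at hj
    exact (ha r j).mpr hj
  · intro hx
    have hmod : x % s ≠ 0 := fun h => mul_notMem_of_subClosed h0 hS (x / s)
      (by rwa [Nat.div_mul_cancel (Nat.dvd_of_mod_eq_zero h)])
    have hx' : x % s - 1 + 1 + x / s * s = x := by
      have := Nat.mod_add_div x s
      rw [mul_comm] at this
      omega
    have := Nat.mod_lt x hs
    refine ⟨x % s - 1, by omega, x / s, ?_, hx'⟩
    rw [getD_map_range_of_lt a (by omega), ← ha, hx']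
    exact hx

theorem admissible_heights {m : ℕ} (ha : ∀ r j, r + 1 + j * s ∈ S ↔ j < a r) (hm : 0 < m)
    (hsparse : IsSparse S) (hS : SubClosed (m * s - 1) S) :
    Admissible m ((List.range (s - 1)).map a) := by
  rw [admissible_iff]
  simp only [List.length_map, List.length_range]
  refine ⟨fun r hr => ?_, fun r hr => ?_⟩
  · rw [getD_map_range_of_lt a (by omega), getD_map_range_of_lt a hr]
    refine ⟨?_, ?_⟩
    · by_contra! h
      have h₁ := (ha r 0).mpr (by omega)
      have h₂ := (ha (r + 1) 0).mpr (by omega)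
      simp only [zero_mul, add_zero] at h₁ h₂
      exact hsparse.2 _ h₁ h₂
    · by_contra! h
      have := hS _ ((ha r (m + a (r + 1))).mpr h) (by rw [add_mul]; omega)
      rw [show r + 1 + (m + a (r + 1)) * s - (m * s - 1) = r + 1 + 1 + a (r + 1) * s by
        rw [add_mul]; have := Nat.le_mul_of_pos_left s hm; omega, ha] at this
      exact lt_irrefl _ this
  · rw [getD_map_range_of_lt a (by omega)]
    by_contra! h
    -- otherwise `m * s - 1 ∈ S`, and subtracting `m * s - 1` from it leaves `0`
    have hms : (m - 1) * s + s = m * s := by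
      rw [← add_one_mul, Nat.sub_add_cancel (show 1 ≤ m from hm)]
    have := hS _ ((ha r (m - 1)).mpr (by omega)) (by omega)
    rw [show r + 1 + (m - 1) * s - (m * s - 1) = 0 by omega] at this
    exact hsparse.1 this

end Heights

theorem profileSet_injOn (s : ℕ) : Set.InjOn (profileSet s) {p | p.length = s - 1} := by
  intro p₁ h₁ p₂ h₂ heq
  have h₁ : p₁.length = s - 1 := h₁
  have h₂ : p₂.length = s - 1 := h₂
  refine List.ext_getElem (h₁.trans h₂.symm) fun r hr₁ hr₂ => ?_
  have hr : r + 1 < s := by omega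
  rw [← List.getD_eq_getElem _ 0 hr₁, ← List.getD_eq_getElem _ 0 hr₂]
  exact eq_of_forall_lt_iff fun j => by
    rw [← add_mul_mem_profileSet_iff hr, ← add_mul_mem_profileSet_iff hr, heq]

theorem bijOn_profileSet {m s : ℕ} (hm : 0 < m) (hs : 0 < s) :
    Set.BijOn (profileSet s) {p | p.length = s - 1 ∧ Admissible m p}
      (sparseClosedSets s (m * s - 1)) := by
  refine ⟨fun p ⟨hlen, hp⟩ => ?_, (profileSet_injOn s).mono fun p hp => hp.1,
    fun S hS => ?_⟩
  · exact ⟨isSparse_profileSet hp hlen, subClosed_profileSet_self p,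
      subClosed_profileSet hp hlen⟩
  · obtain ⟨hsparse, hsub, hsubt⟩ := hS
    choose a ha using exists_height hsub hs
    exact ⟨_, ⟨by simp, admissible_heights ha hm hsparse hsubt⟩,
      profileSet_heights ha hsparse.1 hsub hs⟩

def admissibleProfiles (m : ℕ) : ℕ → Finset (List ℕ)
  | 0 => {[]}
  | 1 => (Finset.range m).image fun a => [a]
  | n + 2 => (admissibleProfiles m (n + 1)).image (List.cons 0) ∪
      (Finset.range m ×ˢ admissibleProfiles m n).image fun x => (x.1 + 1) :: 0 :: x.2

theorem admissible_zero_cons {m : ℕ} (hm : 0 < m) (q : List ℕ) :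
    Admissible m (0 :: q) ↔ Admissible m q := by
  cases q with
  | nil => simp [Admissible, hm]
  | cons b q => simp [Admissible]

theorem mem_admissibleProfiles {m : ℕ} (hm : 0 < m) :
    ∀ n p, p ∈ admissibleProfiles m n ↔ p.length = n ∧ Admissible m p
  | 0, p => by
    simp only [admissibleProfiles, Finset.mem_singleton, List.length_eq_zero_iff, iff_self_and]
    rintro rfl
    trivial
  | 1, p => by
    simp only [admissibleProfiles, Finset.mem_image, Finset.mem_range, List.length_eq_one_iff]
    constructor
    · rintro ⟨a, ha, rfl⟩
      exact ⟨⟨a, rfl⟩, ha⟩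
    · rintro ⟨⟨a, rfl⟩, ha⟩
      exact ⟨a, ha, rfl⟩
  | n + 2, p => by
    simp only [admissibleProfiles, Finset.mem_union, Finset.mem_image, Finset.mem_product,
      Finset.mem_range, Prod.exists, mem_admissibleProfiles hm]
    constructor
    · rintro (⟨q, ⟨hlen, hq⟩, rfl⟩ | ⟨a, q, ⟨ha, hlen, hq⟩, rfl⟩)
      · exact ⟨by simp [hlen], (admissible_zero_cons hm q).mpr hq⟩
      · exact ⟨by simp [hlen], by omega, by omega, (admissible_zero_cons hm q).mpr hq⟩
    · rintro ⟨hlen, hp⟩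
      obtain ⟨a, b, q, rfl⟩ : ∃ a b q, p = a :: b :: q := by
        match p, hlen with
        | a :: b :: q, _ => exact ⟨a, b, q, rfl⟩
      obtain ⟨hle, hzero, hq⟩ := hp
      simp only [List.length_cons, Nat.add_right_cancel_iff] at hlen
      rcases Nat.eq_zero_or_pos a with rfl | ha
      · exact Or.inl ⟨b :: q, ⟨by simpa using hlen, hq⟩, rfl⟩
      · obtain rfl : b = 0 := by omega
        refine Or.inr ⟨a - 1, q, ⟨by omega, hlen, (admissible_zero_cons hm q).mp hq⟩, ?_⟩
        rw [Nat.sub_add_cancel ha]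

theorem card_admissibleProfiles_zero (m : ℕ) : (admissibleProfiles m 0).card = 1 := rfl

theorem card_admissibleProfiles_one (m : ℕ) : (admissibleProfiles m 1).card = m := by
  rw [admissibleProfiles, Finset.card_image_of_injective _ fun a b h => List.head_eq_of_cons_eq h]
  exact Finset.card_range m

theorem card_admissibleProfiles_add_two (m n : ℕ) :
    (admissibleProfiles m (n + 2)).card =
      (admissibleProfiles m (n + 1)).card + m * (admissibleProfiles m n).card := by
  have hdisj : Disjoint ((admissibleProfiles m (n + 1)).image (List.cons 0))
      ((Finset.range m ×ˢ admissibleProfiles m n).image fun x => (x.1 + 1) :: 0 :: x.2) := by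
    simp only [Finset.disjoint_left, Finset.mem_image]
    rintro _ ⟨q, -, rfl⟩ ⟨x, -, hx⟩
    simp at hx
  rw [admissibleProfiles, Finset.card_union_of_disjoint hdisj,
    Finset.card_image_of_injective _ List.cons_injective,
    Finset.card_image_of_injective _ fun x y h => by
      simp only [List.cons.injEq, Nat.add_right_cancel_iff, true_and] at h
      exact Prod.ext h.1 h.2,
    Finset.card_product, Finset.card_range]

theorem ncard_distinctCores_eq_card_admissibleProfiles {m s : ℕ} (hm : 0 < m) (hs : 0 < s) :
    (distinctCores s (m * s - 1)).ncard = (admissibleProfiles m (s - 1)).card := by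
  have hprofiles :
      {p | p.length = s - 1 ∧ Admissible m p} = ↑(admissibleProfiles m (s - 1)) := by
    ext p
    simp [mem_admissibleProfiles hm]
  rw [(bijOn_beadSet_distinctCores s _).ncard_eq, ← (bijOn_profileSet hm hs).ncard_eq,
    hprofiles, Set.ncard_coe_finset]

theorem Eminus_recurrence (m : ℕ) (hm : 1 ≤ m) :
    let E : ℕ → ℕ := fun s =>
      {l : List ℕ | IsPartition l ∧ l.Nodup ∧ IsCore s l ∧ IsCore (m * s - 1) l}.ncard
    E 1 = 1 ∧ E 2 = m ∧ ∀ s, 3 ≤ s → E s = E (s - 1) + m * E (s - 2) := by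
  intro E
  have hE : ∀ s, 0 < s → E s = (admissibleProfiles m (s - 1)).card := fun s hs =>
    ncard_distinctCores_eq_card_admissibleProfiles hm hs
  refine ⟨(hE 1 one_pos).trans (card_admissibleProfiles_zero m),
    (hE 2 two_pos).trans (card_admissibleProfiles_one m), fun s hs => ?_⟩
  obtain ⟨n, rfl⟩ := Nat.exists_eq_add_of_le' hs
  rw [hE _ (by omega), hE _ (by omega), hE _ (by omega)]
  exact card_admissibleProfiles_add_two m n
end

section
/- For α ≥ 1, the number of self-conjugate (2α, 2α+1)-core partitions with distinct parts equals α+1, and the number of self-conjugate (2α+1, 2α+2)-core partitions with distinct parts also equals α+1. -/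
/-!
A partition with distinct parts whose length equals its largest part (as self-conjugacy forces)
is the staircase `(k, k-1, …, 1)`. The hooks of the staircase are exactly the odd numbers below
`2k`, so it is an `s`-core for every even `s`, and a `(2α+1)`-core exactly when `k ≤ α`. In
both cases the partitions counted are the staircases with `k = 0, …, α`.
-/

lemma staircase_succ (k : ℕ) : staircase (k + 1) = (k + 1) :: staircase k := by
  simp [staircase, List.range_succ_eq_map, Function.comp_def]

@[simp] lemma length_staircase (k : ℕ) : (staircase k).length = k := by simp [staircase]

lemma staircase_injective : Function.Injective staircase := fun a b h => by
  simpa using congrArg List.length h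

@[simp] lemma getElem_staircase (k i : ℕ) (hi : i < (staircase k).length) :
    (staircase k)[i] = k - i := by
  simp [staircase]

@[simp] lemma getD_staircase (k i : ℕ) : (staircase k).getD i 0 = k - i := by
  by_cases hi : i < k
  · rw [List.getD_eq_getElem _ _ (by simpa using hi), getElem_staircase]
  · rw [List.getD_eq_default _ _ (by simp; omega)]; omega

lemma headD_staircase (k : ℕ) : (staircase k).headD 0 = k := by
  cases k with
  | zero => rfl
  | succ k => rw [staircase_succ]; rfl

@[simp] lemma length_filter_lt_staircase (k j : ℕ) :
    ((staircase k).filter (j < ·)).length = k - j := by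
  induction k with
  | zero => simp [staircase]
  | succ k ih =>
    rw [staircase_succ, List.filter_cons]
    by_cases h : j < k + 1 <;> simp [h, ih] <;> omega

lemma selfConjugate_staircase (k : ℕ) : SelfConjugate (staircase k) := by
  unfold SelfConjugate conjugate
  rw [headD_staircase]
  exact List.ext_getElem (by simp) fun i _ _ => by simp

lemma pairwise_gt_staircase (k : ℕ) : (staircase k).Pairwise (· > ·) := by
  simp only [staircase, List.pairwise_map]
  exact List.pairwise_lt_range.imp_of_mem fun ha hb h => by simp at ha hb; omega

lemma isPartition_staircase (k : ℕ) : IsPartition (staircase k) :=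
  ⟨(pairwise_gt_staircase k).imp le_of_lt, by simp [staircase]⟩

lemma nodup_staircase (k : ℕ) : (staircase k).Nodup :=
  (pairwise_gt_staircase k).imp ne_of_gt

-- The hook of the staircase at the cell (i, j) has arm = leg = k - i - j - 1.
lemma hasHook_staircase_iff {k s : ℕ} : HasHook (staircase k) s ↔ Odd s ∧ s < 2 * k := by
  simp only [HasHook, hookLength, getD_staircase, length_filter_lt_staircase, Nat.odd_iff]
  constructor
  · rintro ⟨i, j, hj, rfl⟩
    omega
  · rintro ⟨hodd, hs⟩
    exact ⟨0, k - (s + 1) / 2, by omega, by omega⟩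

lemma isCore_staircase_iff {k s : ℕ} : IsCore s (staircase k) ↔ (Odd s → 2 * k ≤ s) := by
  simp only [IsCore, hasHook_staircase_iff, not_and, not_lt]

lemma eq_staircase_of_pairwise_gt {l : List ℕ} (hl : l.Pairwise (· > ·))
    (hpos : ∀ x ∈ l, 0 < x) (hhead : l.headD 0 ≤ l.length) : l = staircase l.length := by
  induction l with
  | nil => rfl
  | cons a t ih =>
    obtain ⟨hat, ht⟩ := List.pairwise_cons.mp hl
    have htail : t = staircase t.length := by
      refine ih ht (fun x hx => hpos x (List.mem_cons_of_mem a hx)) ?_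
      cases t with
      | nil => simp
      | cons b t =>
        simp only [List.headD_cons, List.length_cons, List.mem_cons, forall_eq_or_imp]
          at hhead hat ⊢
        omega
    have ha : t.length < a := by
      rcases Nat.eq_zero_or_pos t.length with h | h
      · simpa [h] using hpos a List.mem_cons_self
      · exact hat _ (by rw [htail, List.mem_iff_getElem]; exact ⟨0, by simpa using h, by simp⟩)
    simp only [List.headD_cons, List.length_cons] at hhead ⊢
    rw [staircase_succ, ← htail, show a = t.length + 1 by omega]

lemma length_eq_headD_of_selfConjugate {l : List ℕ} (h : SelfConjugate l) :
    l.length = l.headD 0 := by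
  conv_lhs => rw [← h]
  simp [conjugate]

lemma eq_staircase_of_selfConjugate {l : List ℕ} (hl : IsPartition l) (hsc : SelfConjugate l)
    (hnd : l.Nodup) : l = staircase l.length :=
  eq_staircase_of_pairwise_gt ((hl.1.and hnd).imp fun h => lt_of_le_of_ne h.1 h.2.symm) hl.2
    (length_eq_headD_of_selfConjugate hsc).ge

lemma setOf_selfConjugate_nodup_eq_image (P : List ℕ → Prop) :
    {l | IsPartition l ∧ SelfConjugate l ∧ l.Nodup ∧ P l} = staircase '' {k | P (staircase k)} := by
  ext l
  constructor
  · rintro ⟨hl, hsc, hnd, hP⟩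
    rw [eq_staircase_of_selfConjugate hl hsc hnd] at hP ⊢
    exact ⟨_, hP, rfl⟩
  · rintro ⟨k, hP, rfl⟩
    exact ⟨isPartition_staircase k, selfConjugate_staircase k, nodup_staircase k, hP⟩

lemma ncard_setOf_selfConjugate_nodup_isCore {s t β : ℕ}
    (h : ∀ k, IsCore s (staircase k) ∧ IsCore t (staircase k) ↔ k ≤ β) :
    {l | IsPartition l ∧ SelfConjugate l ∧ l.Nodup ∧ IsCore s l ∧ IsCore t l}.ncard = β + 1 := by
  rw [setOf_selfConjugate_nodup_eq_image (fun l => IsCore s l ∧ IsCore t l),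
    Set.ncard_image_of_injective _ staircase_injective]
  simp [h, Set.Iic_def]

theorem selfConjugate_distinct_consecutive_cores_general (α : ℕ) :
    {l : List ℕ | IsPartition l ∧ SelfConjugate l ∧ l.Nodup ∧
      IsCore (2 * α) l ∧ IsCore (2 * α + 1) l}.ncard = α + 1 ∧
    {l : List ℕ | IsPartition l ∧ SelfConjugate l ∧ l.Nodup ∧
      IsCore (2 * α + 1) l ∧ IsCore (2 * α + 2) l}.ncard = α + 1 :=
  ⟨ncard_setOf_selfConjugate_nodup_isCore fun k => by
      simp only [isCore_staircase_iff, Nat.odd_iff]; omega,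
    ncard_setOf_selfConjugate_nodup_isCore fun k => by
      simp only [isCore_staircase_iff, Nat.odd_iff]; omega⟩

theorem selfConjugate_distinct_consecutive_cores (α : ℕ) (hα : 1 ≤ α) :
    {l : List ℕ | IsPartition l ∧ SelfConjugate l ∧ l.Nodup ∧
      IsCore (2 * α) l ∧ IsCore (2 * α + 1) l}.ncard = α + 1 ∧
    {l : List ℕ | IsPartition l ∧ SelfConjugate l ∧ l.Nodup ∧
      IsCore (2 * α + 1) l ∧ IsCore (2 * α + 2) l}.ncard = α + 1 :=
  selfConjugate_distinct_consecutive_cores_general α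
end
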